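/- arXiv:2112.03329 — 2 statements merged into one kernel-verified Lean document; each statement's English description precedes it below -/
import Mathlib

section
/- Let β be a real with 0 < β < 1, let m ≥ 1 be an integer, and let A be a real with A > 1 + 2^m·β/(1−β). Consider the directed graph with vertices v₀, v₁, …, v_m and, for each i ∈ {1,…,m}, two extra vertices u_i and u'_i and four edges: v_{i−1}→u_i of weight A−1, u_i→v_i of weight 1, v_{i−1}→u'_i of weight A − 2^i·β/(1−β) − 1, and u'_i→v_i of weight 1 + 2^i/(1−β), with source s = v₀ and target t = v_m. Then: (a) all edge weights are nonnegative; (b) every edge of this graph is a feasible transition, and hence every directed s–t path is feasible; and (c) for every subset I ⊆ {1,…,m}, the s–t path that goes through u'_i exactly for the indices i ∈ I (and through u_i otherwise) has cost m·A + ∑_{i∈I} 2^i. -/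
/-!
Common definitions for time-inconsistent planning models (Kleinberg–Oren).
A task graph is given by a finite vertex type `V`, an edge relation
`E : V → V → Prop` and edge weights `w : V → V → ℝ`.  A directed path is
represented by the list of its vertices (nonempty, consecutive vertices joined
by edges, no repeated vertices).
-/

variable {V : Type*}

/-- The (real) cost of a path: the sum of the weights of its edges. -/
def pathCost (w : V → V → ℝ) (p : List V) : ℝ :=
  ((p.zip p.tail).map fun e => w e.1 e.2).sum

/-- `p` is a directed path from `a` to `b` in the graph with edge relation `E`. -/
def IsPathOn (E : V → V → Prop) (a b : V) (p : List V) : Prop :=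
  p.head? = some a ∧ p.getLast? = some b ∧ p.Chain' E ∧ p.Nodup

/-- The perceived cost of a path with present bias `β`:
the weight of the first edge plus `β` times the total weight of the rest. -/
def perceived (w : V → V → ℝ) (β : ℝ) (p : List V) : ℝ :=
  match p.zip p.tail with
  | [] => 0
  | e :: es => w e.1 e.2 + β * ((es.map fun e' => w e'.1 e'.2).sum)

/-- The edge `a → b` is a feasible transition (towards target `t`): it is the
first edge of some `a`–`t` path whose perceived cost is minimum among all
`a`–`t` paths. -/
def FeasibleStep (E : V → V → Prop) (w : V → V → ℝ) (β : ℝ) (t : V) (a b : V) : Prop :=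
  E a b ∧ ∃ q : List V, IsPathOn E a t (a :: b :: q) ∧
    ∀ r : List V, IsPathOn E a t r → perceived w β (a :: b :: q) ≤ perceived w β r

/-- A feasible `s`–`t` path: every edge on it is a feasible transition from its tail. -/
def FeasPath (E : V → V → Prop) (w : V → V → ℝ) (β : ℝ) (s t : V) (p : List V) : Prop :=
  IsPathOn E s t p ∧ p.Chain' (FeasibleStep E w β t)

/-- The directed graph is acyclic: no directed cycle. -/
def NoDirCycle (E : V → V → Prop) : Prop := ∀ v, ¬ Relation.TransGen E v v

/-- Vertices of the chain-of-gadgets graph: `v i` for `i ∈ {0,…,m}` and,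
for each gadget `i ∈ {1,…,m}` (indexed by `Fin m`, gadget `i` ↔ index `i-1`),
two middle vertices `u (i-1) false = u_i` and `u (i-1) true = u'_i`. -/
inductive GVx (m : ℕ) : Type
  | v (i : Fin (m + 1))
  | u (i : Fin m) (primed : Bool)

/-- Edges: `v_{i-1} → u_i`, `v_{i-1} → u'_i`, `u_i → v_i`, `u'_i → v_i`. -/
def GE (m : ℕ) : GVx m → GVx m → Prop
  | GVx.v j, GVx.u i _ => (j : ℕ) = (i : ℕ)
  | GVx.u i _, GVx.v j => (j : ℕ) = (i : ℕ) + 1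
  | _, _ => False

/-- Edge weights: `v_{i-1}→u_i` has weight `A-1`, `u_i→v_i` weight `1`,
`v_{i-1}→u'_i` weight `A - 2^i·β/(1-β) - 1`, and `u'_i→v_i` weight
`1 + 2^i/(1-β)` (gadget `i` is represented by the index `j = i - 1 : Fin m`). -/
noncomputable def Gw (m : ℕ) (β A : ℝ) : GVx m → GVx m → ℝ
  | GVx.v _, GVx.u _ false => A - 1
  | GVx.v _, GVx.u j true => A - (2 : ℝ) ^ ((j : ℕ) + 1) * β / (1 - β) - 1
  | GVx.u _ false, GVx.v _ => 1
  | GVx.u j true, GVx.v _ => 1 + (2 : ℝ) ^ ((j : ℕ) + 1) / (1 - β)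
  | _, _ => 0

/-- The `s`–`t` path that goes through `u'_i` exactly for the indices `i` with
`f (i-1) = true` (and through `u_i` otherwise). -/
def Gpath (m : ℕ) (f : Fin m → Bool) : List (GVx m) :=
  ((List.finRange m).flatMap fun j => [GVx.v j.castSucc, GVx.u j (f j)]) ++ [GVx.v (Fin.last m)]

/-!
Let `φ` be the cost of the cheapest path to `v_m` (never taking a primed vertex, so
`φ(v_i) = (m - i)·A`). It is a potential, `φ a ≤ w(a,b) + φ b` along every edge, so every path
from `c` costs at least `φ c`, and the perceived cost of a path starting `a → c` is at least
`w(a,c) + β·φ c`, with equality for the unprimed continuation. At `v_{i-1}` both successors give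
`A - 1 + β + β·φ(v_i)`: the surcharge `2^i/(1-β)` on `u'_i → v_i`, discounted by `β`, is exactly
what is taken off `v_{i-1} → u'_i`. So every edge is a feasible transition.
-/

section Potential

variable {V : Type*} {E : V → V → Prop} {w : V → V → ℝ} {β : ℝ} {t : V}

lemma pathCost_cons_of_head? {a b : V} {l : List V} (h : l.head? = some b) :
    pathCost w (a :: l) = w a b + pathCost w l := by
  obtain ⟨l', rfl⟩ : ∃ l', l = b :: l' := by
    cases l with
    | nil => simp at h
    | cons c l' => simp_all
  simp [pathCost]

lemma perceived_cons_cons (a b : V) (l : List V) :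
    perceived w β (a :: b :: l) = w a b + β * pathCost w (b :: l) := by
  simp [perceived, pathCost]

lemma List.IsChain.nodup_of_rank {r : V → ℕ} (hr : ∀ a b, E a b → r a < r b) {p : List V}
    (hp : p.IsChain E) : p.Nodup :=
  List.Nodup.of_map r <| List.Pairwise.nodup <|
    ((List.isChain_map r).2 (hp.imp fun a b h => hr a b h)).pairwise

lemma sub_le_pathCost_of_potential {φ : V → ℝ} (hφ : ∀ a b, E a b → φ a ≤ w a b + φ b) :
    ∀ {a : V} {p : List V}, p.IsChain E → p.head? = some a → p.getLast? = some t →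
      φ a - φ t ≤ pathCost w p
  | a, [], _, hhead, _ => by simp at hhead
  | a, [x], _, hhead, hlast => by simp_all [pathCost]
  | a, x :: y :: l, hp, hhead, hlast => by
    obtain rfl : x = a := by simpa using hhead
    obtain ⟨hxy, hyl⟩ := List.isChain_cons_cons.1 hp
    have := sub_le_pathCost_of_potential hφ hyl rfl (by simpa using hlast)
    rw [pathCost_cons_of_head? rfl]
    linarith [hφ _ _ hxy]

lemma feasibleStep_of_potential {r : V → ℕ} (hr : ∀ a b, E a b → r a < r b) {φ : V → ℝ}
    (hφ : ∀ a b, E a b → φ a ≤ w a b + φ b) (hφt : φ t = 0) (hβ : 0 ≤ β) {a b : V} {q : List V}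
    (hab : E a b) (hq : (b :: q).IsChain E) (hqt : (b :: q).getLast? = some t)
    (hcost : pathCost w (b :: q) = φ b) (hmin : ∀ c, E a c → w a b + β * φ b ≤ w a c + β * φ c) :
    FeasibleStep E w β t a b := by
  have hchain : (a :: b :: q).IsChain E := List.isChain_cons_cons.2 ⟨hab, hq⟩
  have hnodup := hchain.nodup_of_rank hr
  refine ⟨hab, q, ⟨rfl, by simpa using hqt, hchain, hnodup⟩, ?_⟩
  rintro (_ | ⟨x, _ | ⟨c, l⟩⟩) ⟨hhead, hlast, hp, -⟩
  · simp at hhead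
  · obtain rfl : x = a := by simpa using hhead
    obtain rfl : x = t := by simpa using hlast
    exact absurd (List.mem_of_getLast? hqt) (List.nodup_cons.1 hnodup).1
  · obtain rfl : x = a := by simpa using hhead
    obtain ⟨hac, hcl⟩ := List.isChain_cons_cons.1 hp
    have hlow := sub_le_pathCost_of_potential hφ hcl rfl (by simpa using hlast)
    rw [hφt, sub_zero] at hlow
    rw [perceived_cons_cons, perceived_cons_cons, hcost]
    linarith [hmin c hac, mul_le_mul_of_nonneg_left hlow hβ]

end Potential

namespace GVx

variable {m : ℕ}

def rank : GVx m → ℕ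
  | .v i => 2 * i
  | .u j _ => 2 * j + 1

lemma rank_lt_of_GE {a b : GVx m} (h : GE m a b) : a.rank < b.rank := by
  cases a <;> cases b <;> simp only [GE] at h <;> simp only [rank] <;> omega

end GVx

section Gadget

variable {m : ℕ} {β A : ℝ}

lemma Gw_u_v (j : Fin m) (b : Bool) (i i' : Fin (m + 1)) :
    Gw m β A (.u j b) (.v i) = Gw m β A (.u j b) (.v i') := by
  cases b <;> rfl

lemma Gw_nonneg (hβ0 : 0 ≤ β) (hβ1 : β < 1) (hA : 1 + (2 : ℝ) ^ m * β / (1 - β) < A)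
    {a b : GVx m} (h : GE m a b) : 0 ≤ Gw m β A a b := by
  have h1β : 0 < 1 - β := sub_pos.2 hβ1
  rcases a with i | ⟨j, _ | _⟩ <;> rcases b with i' | ⟨j', _ | _⟩ <;> simp only [GE] at h <;>
    simp only [Gw]
  · linarith [div_nonneg (mul_nonneg (pow_nonneg zero_le_two m) hβ0) h1β.le]
  · have hpow : (2 : ℝ) ^ ((j' : ℕ) + 1) ≤ 2 ^ m := pow_le_pow_right₀ one_le_two j'.isLt
    have : (2 : ℝ) ^ ((j' : ℕ) + 1) * β / (1 - β) ≤ 2 ^ m * β / (1 - β) := by gcongr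
    linarith
  · norm_num
  · positivity

/-- The cost of the cheapest path to `v_m` (it goes through no primed vertex). -/
noncomputable def gadgetPotential (m : ℕ) (β A : ℝ) : GVx m → ℝ
  | .v i => ((m - i : ℕ) : ℝ) * A
  | .u j b => ((m - (j + 1) : ℕ) : ℝ) * A + Gw m β A (.u j b) (.v (Fin.last m))

lemma gadgetPotential_last : gadgetPotential m β A (.v (Fin.last m)) = 0 := by
  simp [gadgetPotential]

lemma Gw_v_u_add_Gw_u_v (hβ1 : β < 1) (i i' : Fin (m + 1)) (j : Fin m) (b : Bool) :
    Gw m β A (.v i) (.u j b) + Gw m β A (.u j b) (.v i') =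
      A + if b then (2 : ℝ) ^ ((j : ℕ) + 1) else 0 := by
  have h1β : (1 : ℝ) - β ≠ 0 := (sub_pos.2 hβ1).ne'
  cases b <;> simp only [Gw, Bool.false_eq_true, ↓reduceIte]
  · ring
  · field_simp; ring

lemma Gw_v_u_add_mul_Gw_u_v (hβ1 : β < 1) (i i' : Fin (m + 1)) (j : Fin m) (b : Bool) :
    Gw m β A (.v i) (.u j b) + β * Gw m β A (.u j b) (.v i') = A - 1 + β := by
  have h1β : (1 : ℝ) - β ≠ 0 := (sub_pos.2 hβ1).ne'
  cases b <;> simp only [Gw]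
  · ring
  · field_simp; ring

lemma gadgetPotential_le (hβ1 : β < 1) {a b : GVx m} (h : GE m a b) :
    gadgetPotential m β A a ≤ Gw m β A a b + gadgetPotential m β A b := by
  rcases a with i | ⟨j, c⟩ <;> rcases b with i' | ⟨j', c'⟩ <;> simp only [GE] at h
  · have hm : ((m - i : ℕ) : ℝ) = ((m - (j' + 1) : ℕ) : ℝ) + 1 := by
      rw [h]; norm_cast; omega
    have hcost := Gw_v_u_add_Gw_u_v (A := A) hβ1 i (Fin.last m) j' c'
    have : (0 : ℝ) ≤ if c' then 2 ^ ((j' : ℕ) + 1) else 0 := by split <;> positivity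
    simp only [gadgetPotential, hm]
    linarith
  · simp only [gadgetPotential, h, Gw_u_v j c i' (Fin.last m)]
    linarith

end Gadget

section TailPath

variable {m : ℕ} (f : Fin m → Bool)

/-- The part of `Gpath m f` from `v_i` on (just `[v_m]` once `m ≤ i`). -/
def tailPath (i : ℕ) : List (GVx m) :=
  ((List.finRange m).drop i).flatMap (fun j => [GVx.v j.castSucc, GVx.u j (f j)]) ++
    [GVx.v (Fin.last m)]

lemma tailPath_zero : tailPath f 0 = Gpath m f := rfl

lemma tailPath_of_lt {i : ℕ} (h : i < m) :
    tailPath f i = .v ⟨i, by omega⟩ :: .u ⟨i, h⟩ (f ⟨i, h⟩) :: tailPath f (i + 1) := by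
  simp [tailPath, List.drop_eq_getElem_cons (l := List.finRange m) (by simpa using h)]

lemma tailPath_of_le {i : ℕ} (h : m ≤ i) : tailPath f i = [.v (Fin.last m)] := by
  simp [tailPath, List.drop_of_length_le (l := List.finRange m) (by simpa using h)]

lemma head?_tailPath {i : ℕ} (h : i ≤ m) : (tailPath f i).head? = some (.v ⟨i, by omega⟩) := by
  rcases h.lt_or_eq with h | rfl
  · simp [tailPath_of_lt f h]
  · simp [tailPath_of_le f le_rfl, Fin.last]

lemma getLast?_tailPath (i : ℕ) : (tailPath f i).getLast? = some (.v (Fin.last m)) := by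
  simp [tailPath]

lemma isChain_tailPath (i : ℕ) : (tailPath f i).IsChain (GE m) := by
  by_cases h : i < m
  · rw [tailPath_of_lt f h, List.isChain_cons_cons, List.isChain_cons]
    refine ⟨rfl, ?_, isChain_tailPath (i + 1)⟩
    simp [head?_tailPath f h, GE]
  · simp [tailPath_of_le f (not_lt.1 h)]
termination_by m - i

lemma pathCost_tailPath {β A : ℝ} (hβ1 : β < 1) (i : ℕ) :
    pathCost (Gw m β A) (tailPath f i) =
      (((List.finRange m).drop i).map
        fun j => A + if f j then (2 : ℝ) ^ ((j : ℕ) + 1) else 0).sum := by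
  by_cases h : i < m
  · rw [tailPath_of_lt f h, pathCost_cons_of_head? rfl,
      pathCost_cons_of_head? (head?_tailPath f h), ← add_assoc, Gw_v_u_add_Gw_u_v hβ1,
      pathCost_tailPath hβ1 (i + 1)]
    conv_rhs => rw [List.drop_eq_getElem_cons (l := List.finRange m) (by simpa using h)]
    simp
  · simp [tailPath_of_le f (not_lt.1 h), pathCost,
      List.drop_of_length_le (l := List.finRange m) (by simpa using not_lt.1 h)]
termination_by m - i

end TailPath

section Feasibility

variable {m : ℕ} {β A : ℝ}

lemma pathCost_tailPath_false (hβ1 : β < 1) (i : ℕ) :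
    pathCost (Gw m β A) (tailPath (fun _ => false) i) = ((m - i : ℕ) : ℝ) * A := by
  simp [pathCost_tailPath _ hβ1]

lemma feasibleStep_of_GE (hβ0 : 0 ≤ β) (hβ1 : β < 1) {a b : GVx m} (h : GE m a b) :
    FeasibleStep (GE m) (Gw m β A) β (.v (Fin.last m)) a b := by
  have feasible {q} := feasibleStep_of_potential (E := GE m) (w := Gw m β A)
    (t := .v (Fin.last m)) (a := a) (b := b) (q := q) (fun _ _ h => GVx.rank_lt_of_GE h)
    (fun _ _ h => gadgetPotential_le hβ1 h) gadgetPotential_last hβ0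
  rcases a with i | ⟨j, c⟩ <;> rcases b with i' | ⟨j', c'⟩ <;> simp only [GE] at h
  · have hhead := head?_tailPath (fun _ => false) (m := m) (i := j' + 1) j'.isLt
    refine feasible (q := tailPath (fun _ => false) (j' + 1)) h ?_ ?_ ?_ ?_
    · exact List.isChain_cons.2 ⟨by simp [hhead, GE], isChain_tailPath _ _⟩
    · rw [List.getLast?_cons, getLast?_tailPath]
      rfl
    · rw [pathCost_cons_of_head? hhead, pathCost_tailPath_false hβ1, gadgetPotential,
        Gw_u_v j' c' _ (Fin.last m), add_comm]
    · rintro (_ | ⟨j'', c''⟩) hc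
      · exact hc.elim
      · obtain rfl : j'' = j' := Fin.ext (hc.symm.trans h)
        simp only [gadgetPotential]
        linarith [Gw_v_u_add_mul_Gw_u_v (A := A) hβ1 i (Fin.last m) j'' c',
          Gw_v_u_add_mul_Gw_u_v (A := A) hβ1 i (Fin.last m) j'' c'']
  · have hhead : (tailPath (fun _ => false) i').head? = some (.v i') := by
      simpa using head?_tailPath (fun _ => false) (m := m) (i := i') (by omega)
    have hcons := List.cons_head?_tail hhead
    refine feasible (q := (tailPath (fun _ => false) i').tail) h ?_ ?_ ?_ ?_
    · rw [hcons]
      exact isChain_tailPath _ _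
    · rw [hcons]
      exact getLast?_tailPath _ _
    · rw [hcons, pathCost_tailPath_false hβ1]
      rfl
    · rintro (i'' | _) hc
      · obtain rfl : i'' = i' := Fin.ext (hc.trans h.symm)
        exact le_rfl
      · exact hc.elim

end Feasibility

lemma isPathOn_Gpath {m : ℕ} (f : Fin m → Bool) :
    IsPathOn (GE m) (GVx.v 0) (GVx.v (Fin.last m)) (Gpath m f) := by
  rw [← tailPath_zero]
  exact ⟨head?_tailPath f m.zero_le, getLast?_tailPath f 0, isChain_tailPath f 0,
    (isChain_tailPath f 0).nodup_of_rank fun _ _ h => GVx.rank_lt_of_GE h⟩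

lemma pathCost_Gpath {m : ℕ} {β A : ℝ} (hβ1 : β < 1) (f : Fin m → Bool) :
    pathCost (Gw m β A) (Gpath m f) =
      m * A + ∑ j ∈ Finset.univ.filter fun j => f j = true, (2 : ℝ) ^ ((j : ℕ) + 1) := by
  rw [← tailPath_zero, pathCost_tailPath f hβ1, List.drop_zero, List.sum_map_add,
    Finset.sum_filter, Fin.sum_univ_def]
  simp

theorem stmt1_general (m : ℕ) (β : ℝ) (hβ0 : 0 < β) (hβ1 : β < 1)
    (A : ℝ) (hA : 1 + (2 : ℝ) ^ m * β / (1 - β) < A) :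
    (∀ a b, GE m a b → 0 ≤ Gw m β A a b) ∧
    (∀ a b, GE m a b → FeasibleStep (GE m) (Gw m β A) β (GVx.v (Fin.last m)) a b) ∧
    (∀ p, IsPathOn (GE m) (GVx.v 0) (GVx.v (Fin.last m)) p →
        FeasPath (GE m) (Gw m β A) β (GVx.v 0) (GVx.v (Fin.last m)) p) ∧
    (∀ f : Fin m → Bool,
        IsPathOn (GE m) (GVx.v 0) (GVx.v (Fin.last m)) (Gpath m f) ∧
        pathCost (Gw m β A) (Gpath m f) =
          m * A + ∑ j ∈ Finset.univ.filter fun j => f j = true, (2 : ℝ) ^ ((j : ℕ) + 1)) := by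
  have feasible : ∀ a b, GE m a b → FeasibleStep (GE m) (Gw m β A) β (GVx.v (Fin.last m)) a b :=
    fun _ _ => feasibleStep_of_GE hβ0.le hβ1
  exact ⟨fun _ _ => Gw_nonneg hβ0.le hβ1 hA, feasible,
    fun p hp => ⟨hp, hp.2.2.1.imp fun a b => feasible a b⟩,
    fun f => ⟨isPathOn_Gpath f, pathCost_Gpath hβ1 f⟩⟩

/-- For the gadget-chain model with source `s = v₀`, target
`t = v_m` and `A > 1 + 2^m·β/(1-β)`: (a) all edge weights are nonnegative;
(b) every edge is a feasible transition, hence every directed `s`–`t` path is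
feasible; (c) the path choosing the primed branch exactly on `I ⊆ {1,…,m}` is
an `s`–`t` path of cost `m·A + ∑_{i∈I} 2^i`. -/
theorem stmt1 (m : ℕ) (hm : 1 ≤ m) (β : ℝ) (hβ0 : 0 < β) (hβ1 : β < 1)
    (A : ℝ) (hA : 1 + (2 : ℝ) ^ m * β / (1 - β) < A) :
    (∀ a b, GE m a b → 0 ≤ Gw m β A a b) ∧
    (∀ a b, GE m a b → FeasibleStep (GE m) (Gw m β A) β (GVx.v (Fin.last m)) a b) ∧
    (∀ p, IsPathOn (GE m) (GVx.v 0) (GVx.v (Fin.last m)) p →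
        FeasPath (GE m) (Gw m β A) β (GVx.v 0) (GVx.v (Fin.last m)) p) ∧
    (∀ f : Fin m → Bool,
        IsPathOn (GE m) (GVx.v 0) (GVx.v (Fin.last m)) (Gpath m f) ∧
        pathCost (Gw m β A) (Gpath m f) =
          m * A + ∑ j ∈ Finset.univ.filter fun j => f j = true, (2 : ℝ) ^ ((j : ℕ) + 1)) :=
  stmt1_general m β hβ0 hβ1 A hA
end

section
/- In the diamond-chain graph built from positive integers s₁, …, s_n, an integer W > max_i s_i, and a real β with 0 < β < 1: for every subset A ⊆ {1,…,n}, the s–t path that goes through u_i exactly for i ∈ A (and through u'_i otherwise) has cost ∑_{i∈A}(s_i + (W−s_i)/β) + ∑_{i∉A}(−s_i + (W+s_i)/β), and this cost equals n·W/β if and only if ∑_{i∈A} s_i = ∑_{i∉A} s_i. Consequently, the number of directed s–t paths of cost exactly n·W/β in the diamond-chain graph equals the number of subsets A ⊆ {1,…,n} with ∑_{i∈A} s_i = ∑_{i∉A} s_i. -/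
/-!
Common definitions for time-inconsistent planning models (Kleinberg–Oren).
A task graph is given by a finite vertex type `V`, an edge relation
`E : V → V → Prop` and edge weights `w : V → V → ℝ`.  A directed path is
represented by the list of its vertices (nonempty, consecutive vertices joined
by edges, no repeated vertices).
-/

variable {V : Type*}

/-- Vertices of the diamond-chain graph built on `n` diamonds: `v i` for
`i ∈ {0,…,n}` and, for each diamond `i ∈ {1,…,n}` (indexed by `Fin n`,
diamond `i` ↔ index `i-1`), the two middle vertices `u (i-1) true = u_i`
(upper branch) and `u (i-1) false = u'_i` (lower branch). -/
inductive DV (n : ℕ) : Type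
  | v (i : Fin (n + 1))
  | u (i : Fin n) (upper : Bool)

/-- Edges of the diamond-chain graph:
`v_{i-1} → u_i`, `v_{i-1} → u'_i`, `u_i → v_i`, `u'_i → v_i`. -/
def DE (n : ℕ) : DV n → DV n → Prop
  | DV.v j, DV.u i _ => (j : ℕ) = (i : ℕ)
  | DV.u i _, DV.v j => (j : ℕ) = (i : ℕ) + 1
  | _, _ => False

/-- Edge weights of the diamond-chain graph built from the integers `sv i`
(`s_i` of the paper), `W` and present bias `β`:
`v_{i-1}→u_i` has weight `s_i`, `u_i→v_i` has weight `(W-s_i)/β`,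
`v_{i-1}→u'_i` has weight `-s_i`, and `u'_i→v_i` has weight `(W+s_i)/β`. -/
noncomputable def Dw (n : ℕ) (sv : Fin n → ℤ) (W : ℤ) (β : ℝ) : DV n → DV n → ℝ
  | DV.v _, DV.u i true => (sv i : ℝ)
  | DV.v _, DV.u i false => -(sv i : ℝ)
  | DV.u i true, DV.v _ => ((W : ℝ) - (sv i : ℝ)) / β
  | DV.u i false, DV.v _ => ((W : ℝ) + (sv i : ℝ)) / β
  | _, _ => 0

/-- The `s`–`t` path of the diamond-chain graph that goes through the upper
vertex `u_i` exactly for the indices `i` with `f (i-1) = true` (i.e. `i ∈ A`),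
and through `u'_i` otherwise. -/
def Dpath (n : ℕ) (f : Fin n → Bool) : List (DV n) :=
  ((List.finRange n).flatMap fun i => [DV.v i.castSucc, DV.u i (f i)]) ++ [DV.v (Fin.last n)]

/-!
Consecutive vertices of a path in the diamond chain climb one level at a time (`v j` at level
`2j`, `u_{j+1}` and `u'_{j+1}` at level `2j+1`), so the `v 0`–`v n` paths are exactly the paths
`Dpath n g`, one for each choice `g` of upper or lower branch in every diamond. The branch
through `u_i` costs `s_i(1 - 1/β) + W/β` and the one through `u'_i` costs `-s_i(1 - 1/β) + W/β`,
so the cost of `Dpath n g` is `n·W/β` plus `(1 - 1/β)` times the signed sum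
`∑_{g i} s_i - ∑_{¬g i} s_i`. As `β ≠ 1`, the cost is `n·W/β` exactly when that sum vanishes,
and the set where `g` is true identifies branch choices with subsets.
-/

theorem List.IsChain.nodup_of_lt {α β : Type*} [Preorder β] {R : α → α → Prop} {f : α → β}
    (hf : ∀ a b, R a b → f a < f b) {l : List α} (h : l.IsChain R) : l.Nodup := by
  have hmap : (l.map f).IsChain (· < ·) := (List.isChain_map f).mpr (h.imp hf)
  exact (List.pairwise_map.mp hmap.pairwise).imp fun hab heq => hab.ne (congrArg f heq)

lemma pathCost_cons_cons (w : V → V → ℝ) (a b : V) (l : List V) :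
    pathCost w (a :: b :: l) = w a b + pathCost w (b :: l) := by
  simp [pathCost]

namespace DV

variable {n : ℕ}

def level : DV n → ℕ
  | v j => 2 * j
  | u i _ => 2 * i + 1

lemma level_lt_of_DE {a b : DV n} (h : DE n a b) : a.level < b.level := by
  cases a <;> cases b <;> simp only [DE, level] at h ⊢ <;> omega

end DV

section DiamondChain

variable {n : ℕ}

def diamondWalk (g : Fin n → Bool) (l : List (Fin n)) : List (DV n) :=
  (l.flatMap fun i => [DV.v i.castSucc, DV.u i (g i)]) ++ [DV.v (Fin.last n)]

@[simp]
lemma diamondWalk_nil (g : Fin n → Bool) : diamondWalk g [] = [DV.v (Fin.last n)] := rfl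

@[simp]
lemma diamondWalk_cons (g : Fin n → Bool) (i : Fin n) (l : List (Fin n)) :
    diamondWalk g (i :: l) = DV.v i.castSucc :: DV.u i (g i) :: diamondWalk g l := by
  simp [diamondWalk]

lemma diamondWalk_congr {g g' : Fin n → Bool} {l : List (Fin n)} (h : ∀ i ∈ l, g i = g' i) :
    diamondWalk g l = diamondWalk g' l := by
  unfold diamondWalk
  rw [List.flatMap_congr fun i hi => by rw [h i hi]]

lemma pathCost_diamondWalk (sv : Fin n → ℤ) (W : ℤ) (β : ℝ) (g : Fin n → Bool)
    (l : List (Fin n)) :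
    pathCost (Dw n sv W β) (diamondWalk g l) =
      (l.map fun i => if g i then (sv i : ℝ) + ((W : ℝ) - sv i) / β
        else -(sv i : ℝ) + ((W : ℝ) + sv i) / β).sum := by
  induction l with
  | nil => simp [pathCost]
  | cons i l ih =>
    -- the weight `Dw (u i b) (v k)` does not depend on `k`
    obtain ⟨k, rest, hk⟩ : ∃ k rest, diamondWalk g l = DV.v k :: rest := by
      cases l <;> simp
    rw [diamondWalk_cons, pathCost_cons_cons, hk, pathCost_cons_cons, ← hk, ih]
    cases hb : g i <;> simp [Dw, hb, add_assoc]

lemma drop_finRange_eq_cons (i : Fin n) :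
    (List.finRange n).drop i = i :: (List.finRange n).drop (i + 1) := by
  rw [List.drop_eq_getElem_cons (by simp)]
  simp

@[simp]
lemma drop_finRange_self : (List.finRange n).drop n = [] :=
  List.drop_eq_nil_of_le (by simp)

lemma head?_diamondWalk_drop (g : Fin n → Bool) (j : Fin (n + 1)) :
    (diamondWalk g ((List.finRange n).drop j)).head? = some (DV.v j) := by
  induction j using Fin.lastCases with
  | last => simp
  | cast i => simp [drop_finRange_eq_cons i]

lemma isChain_diamondWalk_drop (g : Fin n → Bool) (j : Fin (n + 1)) :
    (diamondWalk g ((List.finRange n).drop j)).IsChain (DE n) := by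
  induction j using Fin.reverseInduction with
  | last => simp
  | cast i ih =>
    obtain ⟨rest, hrest⟩ := List.head?_eq_some_iff.mp (head?_diamondWalk_drop g i.succ)
    rw [Fin.val_succ] at hrest ih
    rw [Fin.val_castSucc, drop_finRange_eq_cons, diamondWalk_cons, hrest]
    rw [hrest] at ih
    exact .cons_cons (by simp [DE]) (.cons_cons (by simp [DE]) ih)

lemma isPathOn_Dpath (g : Fin n → Bool) :
    IsPathOn (DE n) (DV.v 0) (DV.v (Fin.last n)) (Dpath n g) := by
  have hchain : (Dpath n g).IsChain (DE n) := isChain_diamondWalk_drop g 0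
  exact ⟨head?_diamondWalk_drop g 0, List.getLast?_concat, hchain,
    hchain.nodup_of_lt fun _ _ h => DV.level_lt_of_DE h⟩

theorem exists_eq_diamondWalk_drop :
    ∀ (j : Fin (n + 1)) (rest : List (DV n)), (DV.v j :: rest).IsChain (DE n) →
      (DV.v j :: rest).getLast? = some (DV.v (Fin.last n)) →
      ∃ g : Fin n → Bool, DV.v j :: rest = diamondWalk g ((List.finRange n).drop j)
  | j, [], _, hl => ⟨fun _ => false, by
      obtain rfl : j = Fin.last n := by simpa using hl
      simp⟩
  | _, [DV.u _ _], _, hl => by simp at hl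
  | _, DV.v _ :: _, hc, _ => by simp [DE] at hc
  | _, DV.u _ _ :: DV.u _ _ :: _, hc, _ => by simp [DE] at hc
  | j, DV.u i b :: DV.v k :: rest, hc, hl => by
      have hi : (j : ℕ) = i := (List.isChain_cons_cons.mp hc).1
      have hk : (k : ℕ) = i + 1 := (List.isChain_cons_cons.mp hc.tail).1
      obtain ⟨g, hg⟩ := exists_eq_diamondWalk_drop k rest hc.tail.tail (by simpa using hl)
      have hdrop : (List.finRange n).drop j = i :: (List.finRange n).drop k := by
        rw [hi, drop_finRange_eq_cons i, hk]
      have hi_notMem : i ∉ (List.finRange n).drop k :=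
        (List.nodup_cons.mp (hdrop ▸ (List.nodup_finRange n).sublist (List.drop_sublist _ _))).1
      refine ⟨Function.update g i b, ?_⟩
      rw [hdrop, diamondWalk_cons, Function.update_self, hg]
      rw [diamondWalk_congr fun i' hi' =>
        Function.update_of_ne (ne_of_mem_of_not_mem hi' hi_notMem) b g]
      simp [Fin.ext_iff, hi]

lemma exists_eq_Dpath {p : List (DV n)}
    (hp : IsPathOn (DE n) (DV.v 0) (DV.v (Fin.last n)) p) : ∃ g, p = Dpath n g := by
  obtain ⟨hhead, hlast, hchain, -⟩ := hp
  obtain ⟨rest, rfl⟩ := List.head?_eq_some_iff.mp hhead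
  exact exists_eq_diamondWalk_drop 0 rest hchain hlast

lemma u_mem_Dpath_iff {g : Fin n → Bool} {i : Fin n} {b : Bool} :
    DV.u i b ∈ Dpath n g ↔ b = g i := by
  simp [Dpath]

lemma Dpath_injective : Function.Injective (Dpath n) := fun _ _ h =>
  funext fun _ => u_mem_Dpath_iff.mp (h ▸ u_mem_Dpath_iff.mpr rfl)

open Finset

section Cost

variable (sv : Fin n → ℤ) (W : ℤ) {β : ℝ} (g : Fin n → Bool)

lemma pathCost_Dpath :
    pathCost (Dw n sv W β) (Dpath n g) =
      ∑ i, if g i then (sv i : ℝ) + ((W : ℝ) - sv i) / β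
        else -(sv i : ℝ) + ((W : ℝ) + sv i) / β := by
  rw [Fin.sum_univ_def]
  exact pathCost_diamondWalk sv W β g _

lemma pathCost_Dpath_eq_sum_filter :
    pathCost (Dw n sv W β) (Dpath n g) =
      (∑ i ∈ univ.filter fun i => g i = true, ((sv i : ℝ) + ((W : ℝ) - (sv i : ℝ)) / β)) +
        ∑ i ∈ univ.filter fun i => g i = false, (-(sv i : ℝ) + ((W : ℝ) + (sv i : ℝ)) / β) := by
  rw [pathCost_Dpath, sum_ite]
  simp

lemma pathCost_Dpath_sub :
    pathCost (Dw n sv W β) (Dpath n g) - n * W / β =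
      (1 - β⁻¹) * (((∑ i ∈ univ.filter fun i => g i = true, sv i) -
        ∑ i ∈ univ.filter fun i => g i = false, sv i : ℤ) : ℝ) := by
  calc pathCost (Dw n sv W β) (Dpath n g) - n * W / β
      = ∑ i, ((if g i then (sv i : ℝ) + ((W : ℝ) - sv i) / β
          else -(sv i : ℝ) + ((W : ℝ) + sv i) / β) - W / β) := by
        rw [pathCost_Dpath, sum_sub_distrib]
        simp [mul_div_assoc]
    _ = ∑ i, (1 - β⁻¹) * (if g i then (sv i : ℝ) else -sv i) :=
        sum_congr rfl fun i _ => by cases g i <;> simp <;> ring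
    _ = _ := by
        rw [← mul_sum, sum_ite]
        simp [sub_eq_add_neg]

lemma pathCost_Dpath_eq_iff (hβ : β ≠ 1) :
    pathCost (Dw n sv W β) (Dpath n g) = n * W / β ↔
      ∑ i ∈ univ.filter fun i => g i = true, sv i =
        ∑ i ∈ univ.filter fun i => g i = false, sv i := by
  have hβ' : 1 - β⁻¹ ≠ 0 := sub_ne_zero.mpr (Ne.symm (inv_ne_one.mpr hβ))
  rw [← sub_eq_zero, pathCost_Dpath_sub, mul_eq_zero_iff_left hβ', Int.cast_eq_zero, sub_eq_zero]

end Cost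

lemma setOf_isPathOn_pathCost_eq (sv : Fin n → ℤ) (W : ℤ) {β : ℝ} (hβ : β ≠ 1) :
    {p : List (DV n) | IsPathOn (DE n) (DV.v 0) (DV.v (Fin.last n)) p ∧
        pathCost (Dw n sv W β) p = n * W / β} =
      (fun A : Finset (Fin n) => Dpath n (· ∈ A)) ''
        {A : Finset (Fin n) | ∑ i ∈ A, sv i = ∑ i ∈ Aᶜ, sv i} := by
  ext p
  constructor
  · rintro ⟨hp, hcost⟩
    obtain ⟨g, rfl⟩ := exists_eq_Dpath hp
    refine ⟨univ.filter fun i => g i = true, ?_, by simp⟩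
    simpa [filter_not] using (pathCost_Dpath_eq_iff sv W g hβ).mp hcost
  · rintro ⟨A, hA, rfl⟩
    refine ⟨isPathOn_Dpath _, (pathCost_Dpath_eq_iff sv W _ hβ).mpr ?_⟩
    replace hA : ∑ i ∈ A, sv i = ∑ i ∈ Aᶜ, sv i := hA
    convert hA using 2 <;> ext <;> simp

end DiamondChain

theorem stmt4_general (n : ℕ) (sv : Fin n → ℤ)
    (W : ℤ) (β : ℝ) (hβ1 : β < 1) :
    (∀ f : Fin n → Bool,
      pathCost (Dw n sv W β) (Dpath n f) =
        (∑ i ∈ Finset.univ.filter fun i => f i = true,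
            ((sv i : ℝ) + ((W : ℝ) - (sv i : ℝ)) / β)) +
        (∑ i ∈ Finset.univ.filter fun i => f i = false,
            (-(sv i : ℝ) + ((W : ℝ) + (sv i : ℝ)) / β)) ∧
      (pathCost (Dw n sv W β) (Dpath n f) = (n : ℝ) * (W : ℝ) / β ↔
        ∑ i ∈ Finset.univ.filter fun i => f i = true, sv i =
          ∑ i ∈ Finset.univ.filter fun i => f i = false, sv i)) ∧
    {p : List (DV n) | IsPathOn (DE n) (DV.v 0) (DV.v (Fin.last n)) p ∧
        pathCost (Dw n sv W β) p = (n : ℝ) * (W : ℝ) / β}.ncard =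
      {A : Finset (Fin n) | ∑ i ∈ A, sv i = ∑ i ∈ Aᶜ, sv i}.ncard := by
  refine ⟨fun f => ⟨pathCost_Dpath_eq_sum_filter sv W f,
    pathCost_Dpath_eq_iff sv W f hβ1.ne⟩, ?_⟩
  rw [setOf_isPathOn_pathCost_eq sv W hβ1.ne,
    Set.ncard_image_of_injective _ fun A B h => ?_]
  ext i
  simpa using congrFun (Dpath_injective h) i

/-- In the diamond-chain graph: for every subset
`A ⊆ {1,…,n}` (encoded as `f : Fin n → Bool`) the corresponding `s`–`t` path
has cost `∑_{i∈A}(s_i + (W-s_i)/β) + ∑_{i∉A}(-s_i + (W+s_i)/β)`, and this cost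
equals `n·W/β` iff `∑_{i∈A} s_i = ∑_{i∉A} s_i`.  Consequently the number of
directed `s`–`t` paths of cost exactly `n·W/β` equals the number of subsets
`A ⊆ {1,…,n}` with `∑_{i∈A} s_i = ∑_{i∉A} s_i`. -/
theorem stmt4 (n : ℕ) (sv : Fin n → ℤ) (hs : ∀ i, 0 < sv i)
    (W : ℤ) (hW : ∀ i, sv i < W) (β : ℝ) (hβ0 : 0 < β) (hβ1 : β < 1) :
    (∀ f : Fin n → Bool,
      pathCost (Dw n sv W β) (Dpath n f) =
        (∑ i ∈ Finset.univ.filter fun i => f i = true,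
            ((sv i : ℝ) + ((W : ℝ) - (sv i : ℝ)) / β)) +
        (∑ i ∈ Finset.univ.filter fun i => f i = false,
            (-(sv i : ℝ) + ((W : ℝ) + (sv i : ℝ)) / β)) ∧
      (pathCost (Dw n sv W β) (Dpath n f) = (n : ℝ) * (W : ℝ) / β ↔
        ∑ i ∈ Finset.univ.filter fun i => f i = true, sv i =
          ∑ i ∈ Finset.univ.filter fun i => f i = false, sv i)) ∧
    {p : List (DV n) | IsPathOn (DE n) (DV.v 0) (DV.v (Fin.last n)) p ∧
        pathCost (Dw n sv W β) p = (n : ℝ) * (W : ℝ) / β}.ncard =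
      {A : Finset (Fin n) | ∑ i ∈ A, sv i = ∑ i ∈ Aᶜ, sv i}.ncard :=
  stmt4_general n sv W β hβ1
end
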